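/- For every a in (0,1) and every odd positive integer k, the function h_{a,k}(x) = ψ⁽ᵏ⁾(x+a) - ψ⁽ᵏ⁾(x) - a·k!/x^{k+1} satisfies (-1)ⁿ (-h_{a,k})⁽ⁿ⁾(x) > 0 for all x > 0 and all nonnegative integers n, i.e., -h_{a,k} is strictly completely monotonic on (0, ∞). -/

import Mathlib

/-
Termwise differentiation of the Bohr–Mollerup limit
`log Γ(x) = lim (x log n + log n! - ∑_{m ≤ n} log (x + m))`, whose derivatives converge
locally uniformly on `(0, ∞)`, gives `ψ(x) = -γ + ∑ₘ (1/(m+1) - 1/(x+m))`, hence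
`ψ⁽ᵏ⁾(x) = (-1)ᵏ⁺¹ k! ζ(k+1, x)` with `ζ(s, x) = ∑ⱼ (x+j)⁻ˢ`. For odd `k` this makes
`-h_{a,k} = k! gₖ₊₁` with `gₛ(x) = ζ(s, x) - ζ(s, x+a) + a x⁻ˢ`. Since `gₛ' = -s gₛ₊₁`, the
`n`-th derivative of `-h_{a,k}` is `(-1)ⁿ (k+n)! gₖ₊ₙ₊₁`, and every `gₛ` is positive because
`ζ(s, ·)` is decreasing and `a > 0`.
-/

noncomputable def digamma : ℝ → ℝ := deriv (fun x => Real.log (Real.Gamma x))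

noncomputable def polygamma (n : ℕ) : ℝ → ℝ := deriv^[n] digamma

open Filter Topology Finset Real
open scoped Nat

theorem eqOn_iterate_deriv_of_hasDerivAt {𝕜 E : Type*} [NontriviallyNormedField 𝕜]
    [NormedAddCommGroup E] [NormedSpace 𝕜 E] {U : Set 𝕜} (hU : IsOpen U) {F : 𝕜 → E}
    {f : ℕ → 𝕜 → E} (h0 : Set.EqOn F (f 0) U)
    (hf : ∀ n, ∀ y ∈ U, HasDerivAt (f n) (f (n + 1) y) y) :
    ∀ n, Set.EqOn (deriv^[n] F) (f n) U
  | 0 => h0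
  | n + 1 => fun y hy => by
    rw [Function.iterate_succ_apply',
      ((eqOn_iterate_deriv_of_hasDerivAt hU h0 hf n).eventuallyEq_of_mem
        (hU.mem_nhds hy)).deriv_eq]
    exact (hf n y hy).deriv

theorem eqOn_iterate_deriv_of_hasDerivAt_neg_mul {U : Set ℝ} (hU : IsOpen U) {c : ℕ}
    {g : ℕ → ℝ → ℝ} (hg : ∀ s, c < s → ∀ y ∈ U, HasDerivAt (g s) (-s * g (s + 1) y) y)
    {F : ℝ → ℝ} (hF : Set.EqOn F (fun y => c ! * g (c + 1) y) U) (n : ℕ) :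
    Set.EqOn (deriv^[n] F) (fun y => (-1) ^ n * (c + n)! * g (c + n + 1) y) U := by
  refine eqOn_iterate_deriv_of_hasDerivAt hU
    (f := fun n y => (-1) ^ n * ((c + n)! : ℝ) * g (c + n + 1) y)
    (fun y hy => by simpa using hF hy)
    (fun n y hy => ((hg (c + n + 1) (by omega) y hy).const_mul _).congr_deriv ?_) n
  rw [← add_assoc, Nat.factorial_succ]
  push_cast
  ring

lemma hasDerivAt_inv_pow (s : ℕ) {x : ℝ} (hx : x ≠ 0) :
    HasDerivAt (fun y : ℝ => (y ^ s)⁻¹) (-s * (x ^ (s + 1))⁻¹) x := by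
  refine ((hasDerivAt_pow s x).inv (pow_ne_zero s hx)).congr_deriv ?_
  cases s with
  | zero => simp
  | succ s => rw [Nat.add_sub_cancel]; field_simp; ring

noncomputable def hurwitzSeries (s : ℕ) (x : ℝ) : ℝ := ∑' j : ℕ, ((x + j) ^ s)⁻¹

lemma summable_inv_add_nat_pow {x : ℝ} (hx : 0 ≤ x) {s : ℕ} (hs : 1 < s) :
    Summable fun j : ℕ => ((x + j) ^ s)⁻¹ := by
  refine ((Real.summable_one_div_nat_add_rpow x s).2 (by exact_mod_cast hs)).congr fun j => ?_
  rw [abs_of_nonneg (by positivity), Real.rpow_natCast, one_div, add_comm]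

lemma inv_add_nat_pow_le {l y : ℝ} (hl : 0 < l) (hly : l ≤ y) (s j : ℕ) :
    ((y + j) ^ s)⁻¹ ≤ ((l + j) ^ s)⁻¹ := by
  gcongr

lemma hurwitzSeries_antitoneOn {s : ℕ} (hs : 1 < s) :
    AntitoneOn (hurwitzSeries s) (Set.Ioi 0) :=
  fun x (hx : 0 < x) _ _ hxy =>
    (summable_inv_add_nat_pow (hx.le.trans hxy) hs).tsum_le_tsum (inv_add_nat_pow_le hx hxy s)
      (summable_inv_add_nat_pow hx.le hs)

lemma hasDerivAt_hurwitzSeries {s : ℕ} (hs : 1 < s) {x : ℝ} (hx : 0 < x) :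
    HasDerivAt (hurwitzSeries s) (-s * hurwitzSeries (s + 1) x) x := by
  have hl : 0 < x / 2 := half_pos hx
  have hmem : x ∈ Set.Ioi (x / 2) := half_lt_self hx
  have hpos : ∀ y ∈ Set.Ioi (x / 2), ∀ j : ℕ, 0 < y + j :=
    fun y hy j => add_pos_of_pos_of_nonneg (hl.trans hy) j.cast_nonneg
  have key := hasDerivAt_tsum_of_isPreconnected (g := fun (j : ℕ) (y : ℝ) => ((y + j) ^ s)⁻¹)
    (g' := fun j y => -s * ((y + j) ^ (s + 1))⁻¹)
    ((summable_inv_add_nat_pow hl.le (s := s + 1) (by omega)).mul_left (s : ℝ)) isOpen_Ioi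
    isPreconnected_Ioi (fun j y hy => ?_) (fun j y hy => ?_) hmem
    (summable_inv_add_nat_pow hx.le hs) hmem
  · rwa [tsum_mul_left] at key
  · exact (hasDerivAt_inv_pow s (hpos y hy j).ne').comp_add_const y j
  · have hyj := hpos y hy j
    rw [norm_mul, norm_neg, Real.norm_natCast, Real.norm_of_nonneg (by positivity)]
    exact mul_le_mul_of_nonneg_left (inv_add_nat_pow_le hl (le_of_lt hy) _ j) s.cast_nonneg

noncomputable def digammaSeries (x : ℝ) : ℝ := ∑' m : ℕ, (((m : ℝ) + 1)⁻¹ - (x + m)⁻¹)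

lemma abs_inv_nat_succ_sub_inv_add_nat_le {l y : ℝ} (hl : 0 < l) (hl1 : l ≤ 1) (hly : l ≤ y)
    (m : ℕ) : |((m : ℝ) + 1)⁻¹ - (y + m)⁻¹| ≤ |y - 1| * ((l + m) ^ 2)⁻¹ := by
  have hy : 0 < y := hl.trans_le hly
  have hdiff : ((m : ℝ) + 1)⁻¹ - (y + m)⁻¹ = (y - 1) * (((m : ℝ) + 1) * (y + m))⁻¹ := by
    field_simp
    ring
  have hlm : 0 < l + m := add_pos_of_pos_of_nonneg hl m.cast_nonneg
  have hym : 0 < y + m := add_pos_of_pos_of_nonneg hy m.cast_nonneg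
  rw [hdiff, abs_mul, abs_inv, abs_of_pos (mul_pos m.cast_add_one_pos hym)]
  refine mul_le_mul_of_nonneg_left (inv_anti₀ (by positivity) ?_) (abs_nonneg _)
  rw [sq]
  exact mul_le_mul (by linarith) (by linarith) hlm.le (by positivity)

lemma tendsto_log_sub_harmonic_succ :
    Tendsto (fun n : ℕ => log n - (harmonic (n + 1) : ℝ)) atTop
      (𝓝 (-eulerMascheroniConstant)) := by
  have h := tendsto_harmonic_sub_log.neg.sub tendsto_one_div_add_atTop_nhds_zero_nat
  rw [sub_zero] at h
  refine h.congr fun n => ?_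
  rw [harmonic_succ]
  push_cast
  ring

lemma hasDerivAt_logGammaSeq (n : ℕ) {y : ℝ} (hy : 0 < y) :
    HasDerivAt (fun z => BohrMollerup.logGammaSeq z n)
      (log n - harmonic (n + 1) + ∑ m ∈ range (n + 1), (((m : ℝ) + 1)⁻¹ - (y + m)⁻¹)) y := by
  have hlog : ∀ m ∈ range (n + 1), HasDerivAt (fun z => log (z + m)) (y + m)⁻¹ y :=
    fun m _ => (hasDerivAt_log (by positivity)).comp_add_const y (m : ℝ)
  refine (((hasDerivAt_mul_const (log n)).add_const _).sub
    (HasDerivAt.fun_sum hlog)).congr_deriv ?_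
  simp only [harmonic, Rat.cast_sum, Rat.cast_inv, Rat.cast_natCast, sum_sub_distrib]
  push_cast
  ring

lemma hasDerivAt_log_Gamma {x : ℝ} (hx : 0 < x) :
    HasDerivAt (fun y => log (Gamma y)) (-eulerMascheroniConstant + digammaSeries x) x := by
  obtain ⟨l, hl, hlx, hl1⟩ : ∃ l, 0 < l ∧ l < x ∧ l ≤ 1 :=
    ⟨min x 1 / 2, by positivity, by linarith [min_le_left x 1], by linarith [min_le_right x 1]⟩
  have hmem : x ∈ Set.Ioo l (x + 1) := ⟨hlx, by linarith⟩
  have hpos : ∀ y ∈ Set.Ioo l (x + 1), 0 < y := fun y hy => hl.trans hy.1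
  have hseries : TendstoUniformlyOn
      (fun N (y : ℝ) => ∑ m ∈ range N, (((m : ℝ) + 1)⁻¹ - (y + m)⁻¹))
      digammaSeries atTop (Set.Ioo l (x + 1)) := by
    refine tendstoUniformlyOn_tsum_nat
      ((summable_inv_add_nat_pow hl.le one_lt_two).mul_left (x + 2))
      fun m y hy => (abs_inv_nat_succ_sub_inv_add_nat_le hl hl1 hy.1.le m).trans ?_
    gcongr
    rw [abs_le]
    constructor <;> linarith [hpos y hy, hy.2]
  exact hasDerivAt_of_tendstoUniformlyOn isOpen_Ioo
    ((tendsto_log_sub_harmonic_succ.tendstoUniformlyOn_const _).add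
      fun v hv => (tendsto_add_atTop_nat 1).eventually (hseries v hv))
    (Eventually.of_forall fun n y hy => hasDerivAt_logGammaSeq n (hpos y hy))
    (fun y hy => BohrMollerup.tendsto_log_gamma (hpos y hy)) hmem

lemma hasDerivAt_digammaSeries {x : ℝ} (hx : 0 < x) :
    HasDerivAt digammaSeries (hurwitzSeries 2 x) x := by
  obtain ⟨l, hl, hx', h1⟩ : ∃ l, 0 < l ∧ l < x ∧ l < 1 :=
    ⟨min x 1 / 2, by positivity, by linarith [min_le_left x 1], by linarith [min_le_right x 1]⟩
  refine hasDerivAt_tsum_of_isPreconnected (g' := fun (m : ℕ) (y : ℝ) => ((y + m) ^ 2)⁻¹)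
    (summable_inv_add_nat_pow hl.le one_lt_two) isOpen_Ioi isPreconnected_Ioi
    (fun m y hy => ?_) (fun m y hy => ?_) h1 ?_ hx'
  · have hym : 0 < y + m := add_pos_of_pos_of_nonneg (hl.trans hy) m.cast_nonneg
    exact (((hasDerivAt_inv hym.ne').comp_add_const y (m : ℝ)).const_sub _).congr_deriv
      (neg_neg _)
  · rw [Real.norm_of_nonneg (by positivity)]
    exact inv_add_nat_pow_le hl (le_of_lt hy) 2 m
  · -- the series vanishes termwise at `1`
    simp_rw [add_comm (1 : ℝ), sub_self]
    exact summable_zero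

lemma deriv_digamma {x : ℝ} (hx : 0 < x) : deriv digamma x = hurwitzSeries 2 x := by
  have h : digamma =ᶠ[𝓝 x] fun y => -eulerMascheroniConstant + digammaSeries y :=
    (eventually_gt_nhds hx).mono fun y hy => (hasDerivAt_log_Gamma hy).deriv
  rw [h.deriv_eq]
  exact ((hasDerivAt_digammaSeries hx).const_add _).deriv

lemma polygamma_of_odd {k : ℕ} (hk : Odd k) {x : ℝ} (hx : 0 < x) :
    polygamma k x = k ! * hurwitzSeries (k + 1) x := by
  obtain ⟨m, rfl⟩ := hk
  have h := eqOn_iterate_deriv_of_hasDerivAt_neg_mul isOpen_Ioi (c := 1)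
    (fun s hs y hy => hasDerivAt_hurwitzSeries hs hy) (F := deriv digamma)
    (fun y hy => by simpa using deriv_digamma hy) (2 * m) hx
  rw [polygamma, Function.iterate_add_apply, Function.iterate_one, h,
    (even_two_mul m).neg_one_pow, one_mul, add_comm 1]

noncomputable def hurwitzShiftGap (a : ℝ) (s : ℕ) (y : ℝ) : ℝ :=
  hurwitzSeries s y - hurwitzSeries s (y + a) + a * (y ^ s)⁻¹

lemma hasDerivAt_hurwitzShiftGap {a : ℝ} (ha : 0 ≤ a) {s : ℕ} (hs : 1 < s) {y : ℝ}
    (hy : 0 < y) :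
    HasDerivAt (hurwitzShiftGap a s) (-s * hurwitzShiftGap a (s + 1) y) y := by
  refine (((hasDerivAt_hurwitzSeries hs hy).sub
    ((hasDerivAt_hurwitzSeries hs (by positivity)).comp_add_const y a)).add
    ((hasDerivAt_inv_pow s hy.ne').const_mul a)).congr_deriv ?_
  rw [hurwitzShiftGap]
  ring

lemma hurwitzShiftGap_pos {a : ℝ} (ha : 0 < a) {s : ℕ} (hs : 1 < s) {y : ℝ} (hy : 0 < y) :
    0 < hurwitzShiftGap a s y := by
  have hle := hurwitzSeries_antitoneOn hs hy (show 0 < y + a by positivity)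
    (le_add_of_nonneg_right ha.le)
  have hinv : 0 < a * (y ^ s)⁻¹ := by positivity
  rw [hurwitzShiftGap]
  linarith

theorem stmt_15 (a : ℝ) (ha : a ∈ Set.Ioo (0:ℝ) 1) (k : ℕ) (hk : Odd k)
    (n : ℕ) (x : ℝ) (hx : 0 < x) :
    0 < (-1) ^ n *
      deriv^[n] (fun y : ℝ =>
        -(polygamma k (y + a) - polygamma k y - a * (Nat.factorial k : ℝ) / y ^ (k + 1))) x := by
  have hk1 : 0 < k := hk.pos
  have hF : Set.EqOn (fun y : ℝ =>
        -(polygamma k (y + a) - polygamma k y - a * (Nat.factorial k : ℝ) / y ^ (k + 1)))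
      (fun y => k ! * hurwitzShiftGap a (k + 1) y) (Set.Ioi 0) := fun y (hy : 0 < y) => by
    dsimp only
    rw [polygamma_of_odd hk hy, polygamma_of_odd hk (add_pos hy ha.1), hurwitzShiftGap]
    ring
  rw [eqOn_iterate_deriv_of_hasDerivAt_neg_mul isOpen_Ioi
    (fun s hs y hy => hasDerivAt_hurwitzShiftGap ha.1.le (by omega) hy) hF n hx,
    ← mul_assoc, ← mul_assoc, ← pow_add, (Even.add_self n).neg_one_pow, one_mul]
  exact mul_pos (by positivity) (hurwitzShiftGap_pos ha.1 (by omega) hx)
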